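/- Let λ ∈ ℂ with |λ| = 1, λ not a root of unity. Let p₂ = −1/2, and let q(t) = 1 + q₂t² + Σ_{k≥2} q_{2k} t^{2k} be an even formal series whose quadratic coefficient satisfies q₂(λ+1)² = p₂(λ−1)². Let φ be normalized and symmetric. Then there exists a formal power series Δq(t) = Σ_{k≥2} η_{2k} t^{2k} such that both Π₊( ℰ(q+Δq, φ)·φ_z ) = 0 and Π( ℰ(q+Δq, φ)·φ_z̄ ) = 0 hold; equivalently [S_{q+Δq}(φ⁻,φ)] = 1. Moreover the coefficients η_{2k} are uniquely determined by a lower-triangular recursion. -/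

import Mathlib

/- Common setup: formal power series in two commuting variables `z, z̄` over `ℂ`,
represented by their coefficient functions, together with the operators of
Treschev's linearizable billiard construction. -/

open scoped BigOperators

noncomputable section

namespace Treschev

/-- A formal power series `f = Σ_{j,k≥0} f_{j,k} z^j z̄^k`, given by its coefficients. -/
abbrev FPS : Type := ℕ → ℕ → ℂ

/-- A formal power series in one variable `t`, given by its coefficients. -/
abbrev OPS : Type := ℕ → ℂ

/-- Product of two formal power series (Cauchy product). -/
def fmul (f g : FPS) : FPS := fun j k =>
  ∑ a ∈ Finset.range (j + 1), ∑ b ∈ Finset.range (k + 1), f a b * g (j - a) (k - b)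

/-- The constant series `1`. -/
def oneF : FPS := fun j k => if j = 0 ∧ k = 0 then 1 else 0

/-- Powers of a formal power series. -/
def fpow (f : FPS) : ℕ → FPS
  | 0 => oneF
  | n + 1 => fmul f (fpow f n)

/-- Substitution of a two-variable series `u` with zero constant term into a
one-variable series `q` (the formula is the correct one whenever `u 0 0 = 0`). -/
def substOne (q : OPS) (u : FPS) : FPS := fun j k =>
  ∑ m ∈ Finset.range (j + k + 1), q m * fpow u m j k

/-- Substitution `F(u, v)` of two series with zero constant term into a two-variable
series `F` (the formula is the correct one whenever `u 0 0 = 0` and `v 0 0 = 0`). -/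
def subst2 (F : FPS) (u v : FPS) : FPS := fun j k =>
  ∑ m ∈ Finset.range (j + k + 1), ∑ n ∈ Finset.range (j + k + 1),
    F m n * fmul (fpow u m) (fpow v n) j k

/-- The Taylor series of `cos`. -/
def cosSeries : OPS := fun n => if n % 2 = 0 then (-1 : ℂ) ^ (n / 2) / (n.factorial : ℂ) else 0

/-- `(t₁ + t₂)/2` as a two-variable series. -/
def halfSum : FPS := fun j k =>
  if j = 1 ∧ k = 0 then (1 / 2 : ℂ) else if j = 0 ∧ k = 1 then (1 / 2 : ℂ) else 0

/-- `(t₁ − t₂)/2` as a two-variable series. -/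
def halfDiff : FPS := fun j k =>
  if j = 1 ∧ k = 0 then (1 / 2 : ℂ) else if j = 0 ∧ k = 1 then (-(1 / 2) : ℂ) else 0

/-- The generating function `S_q(t₁,t₂) = q((t₁+t₂)/2)·cos((t₁−t₂)/2)` as a
formal power series in `t₁, t₂`. -/
def Sq (q : OPS) : FPS := fmul (substOne q halfSum) (substOne cosSeries halfDiff)

/-- Formal partial derivative with respect to the first variable. -/
def d1 (f : FPS) : FPS := fun j k => ((j + 1 : ℕ) : ℂ) * f (j + 1) k

/-- Formal partial derivative with respect to the second variable. -/
def d2 (f : FPS) : FPS := fun j k => ((k + 1 : ℕ) : ℂ) * f j (k + 1)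

/-- `f⁺`, with `(f⁺)_{j,k} = λ^{j−k} f_{j,k}`. -/
def plus (l : ℂ) (f : FPS) : FPS := fun j k => l ^ ((j : ℤ) - (k : ℤ)) * f j k

/-- `f⁻`, with `(f⁻)_{j,k} = λ^{k−j} f_{j,k}`. -/
def minus (l : ℂ) (f : FPS) : FPS := fun j k => l ^ ((k : ℤ) - (j : ℤ)) * f j k

/-- `∇f = f⁻ − λ⁻¹ f`. -/
def nab (l : ℂ) (f : FPS) : FPS := minus l f - l⁻¹ • f

/-- `∇⁺f = f − λ f⁺`. -/
def nabPlus (l : ℂ) (f : FPS) : FPS := f - l • plus l f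

/-- The average `[f] = Σ_j f_{j,j} (z z̄)^j`. -/
def avg (f : FPS) : FPS := fun j k => if j = k then f j k else 0

/-- The projection `Π₊(f) = [z f]/z`. -/
def Pip (f : FPS) : FPS := fun j k => if k = j + 1 then f j k else 0

/-- The projection `Π(f) = [z̄ f]/z̄`. -/
def Pim (f : FPS) : FPS := fun j k => if j = k + 1 then f j k else 0

/-- `E⁺`, the partial inverse of `∇⁺`. -/
def Eplus (l : ℂ) (f : FPS) : FPS := fun j k =>
  if k = j + 1 then 0 else f j k / (1 - l ^ ((j : ℤ) - (k : ℤ) + 1))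

/-- `E`, the partial inverse of `∇`. -/
def Emin (l : ℂ) (f : FPS) : FPS := fun j k =>
  if j = k + 1 then 0 else f j k / (l ^ ((k : ℤ) - (j : ℤ)) - l⁻¹)

/-- `Ẽ`, with `Ẽ(f − f⁺) = f − [f]`. -/
def Etilde (l : ℂ) (f : FPS) : FPS := fun j k =>
  if j = k then 0 else f j k / (1 - l ^ ((j : ℤ) - (k : ℤ)))

/-- `f ∘ I`, where `I(z,z̄) = (z̄,z)`. -/
def swapI (f : FPS) : FPS := fun j k => f k j

/-- Multiplication by `z`. -/
def mulz (f : FPS) : FPS := fun j k => if j = 0 then 0 else f (j - 1) k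

/-- Multiplication by `z̄`. -/
def mulzbar (f : FPS) : FPS := fun j k => if k = 0 then 0 else f j (k - 1)

/-- Division by `z` (valid on series divisible by `z`). -/
def divz (f : FPS) : FPS := fun j k => f (j + 1) k

/-- Multiplicative inverse `1/h` (the geometric-series formula, which is the correct
inverse whenever `h 0 0 ≠ 0`). -/
def finv (h : FPS) : FPS := fun j k =>
  (h 0 0)⁻¹ * ∑ m ∈ Finset.range (j + k + 1),
    fpow (fun a b => if a = 0 ∧ b = 0 then 0 else -(h a b) * (h 0 0)⁻¹) m j k

/-- Quotient `f/h` of formal power series. -/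
def fdiv (f h : FPS) : FPS := fmul f (finv h)

/-- `ℰ(q,φ) = ∂₂S_q(φ⁻,φ) + ∂₁S_q(φ,φ⁺)`. -/
def Err (l : ℂ) (q : OPS) (φ : FPS) : FPS :=
  subst2 (d2 (Sq q)) (minus l φ) φ + subst2 (d1 (Sq q)) φ (plus l φ)

/-- `∂_φℰ(q,φ)(w) = ∂₁₂S_q(φ⁻,φ)w⁻ + ∂₂₂S_q(φ⁻,φ)w + ∂₁₁S_q(φ,φ⁺)w + ∂₁₂S_q(φ,φ⁺)w⁺`. -/
def dErr (l : ℂ) (q : OPS) (φ : FPS) (w : FPS) : FPS :=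
  fmul (subst2 (d1 (d2 (Sq q))) (minus l φ) φ) (minus l w)
    + fmul (subst2 (d2 (d2 (Sq q))) (minus l φ) φ) w
    + fmul (subst2 (d1 (d1 (Sq q))) φ (plus l φ)) w
    + fmul (subst2 (d1 (d2 (Sq q))) φ (plus l φ)) (plus l w)

/-- `h = ∂₁₂S_q(φ⁻,φ)·φ_z·φ_z⁻`. -/
def hFun (l : ℂ) (q : OPS) (φ : FPS) : FPS :=
  fmul (fmul (subst2 (d1 (d2 (Sq q))) (minus l φ) φ) (d1 φ)) (minus l (d1 φ))

/-- `ψ = −E⁺( ℰ(q,φ)·φ_z − Π₊(ℰ(q,φ)·φ_z) )`. -/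
def psiFun (l : ℂ) (q : OPS) (φ : FPS) : FPS :=
  -Eplus l (fmul (Err l q φ) (d1 φ) - Pip (fmul (Err l q φ) (d1 φ)))

/-- `w = φ_z·E( ψ/h − Π(ψ/h) )`. -/
def wFun (l : ℂ) (q : OPS) (φ : FPS) : FPS :=
  fmul (d1 φ)
    (Emin l (fdiv (psiFun l q φ) (hFun l q φ) - Pim (fdiv (psiFun l q φ) (hFun l q φ))))

/-- `κ = ∂₁₂S_q(φ⁻,φ)·(λ⁻¹ φ_z⁻ φ_z̄ − λ φ_z̄⁻ φ_z)`. -/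
def kappaFun (l : ℂ) (q : OPS) (φ : FPS) : FPS :=
  fmul (subst2 (d1 (d2 (Sq q))) (minus l φ) φ)
    (l⁻¹ • fmul (minus l (d1 φ)) (d2 φ) - l • fmul (minus l (d2 φ)) (d1 φ))

/-- `g = φ_z̄ / φ_z`. -/
def gFun (φ : FPS) : FPS := fdiv (d2 φ) (d1 φ)

/-- `R₁ = ( −[z̄·ℰ·φ_z̄] + [z̄·g·[z·ℰ·φ_z]/z] ) / ( λ·z·[κ] )`. -/
def R1Fun (l : ℂ) (q : OPS) (φ : FPS) : FPS :=
  l⁻¹ • fmul (finv (avg (kappaFun l q φ)))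
    (divz (-avg (mulzbar (fmul (Err l q φ) (d2 φ)))
      + avg (mulzbar (fmul (gFun φ) (divz (avg (mulz (fmul (Err l q φ) (d1 φ)))))))))

/-- `R₂ = (1/z)·[ z̄·ψ·(λ⁻¹g − λg⁻)·([κ]−κ)/(κ·[κ]) ]`. -/
def R2Fun (l : ℂ) (q : OPS) (φ : FPS) : FPS :=
  divz (avg (mulzbar
    (fmul (fmul (psiFun l q φ) (l⁻¹ • gFun φ - l • minus l (gFun φ)))
      (fmul (avg (kappaFun l q φ) - kappaFun l q φ)
        (finv (fmul (kappaFun l q φ) (avg (kappaFun l q φ))))))))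

/-- `R₃ = [z·∂_z(S_q(φ⁻,φ))]/z − ∇⁺( h·Π(ψ/h) )`. -/
def R3Fun (l : ℂ) (q : OPS) (φ : FPS) : FPS :=
  Pip (d1 (subst2 (Sq q) (minus l φ) φ))
    - nabPlus l (fmul (hFun l q φ) (Pim (fdiv (psiFun l q φ) (hFun l q φ))))

/-- `R₄ = ∂_z(ℰ(q,φ))·(w/φ_z) + R₃/φ_z`. -/
def R4Fun (l : ℂ) (q : OPS) (φ : FPS) : FPS :=
  fmul (d1 (Err l q φ)) (fdiv (wFun l q φ) (d1 φ)) + fdiv (R3Fun l q φ) (d1 φ)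

/-- `φ = z + z̄ + O₃`. -/
def normalized (φ : FPS) : Prop :=
  φ 0 0 = 0 ∧ φ 1 0 = 1 ∧ φ 0 1 = 1 ∧ φ 2 0 = 0 ∧ φ 1 1 = 0 ∧ φ 0 2 = 0

/-- The weighted norm `‖f‖_ρ = Σ_{j,k} |f_{j,k}| ρ^{j+k} ∈ [0,∞]`. -/
def wnorm (ρ : ℝ) (f : FPS) : ENNReal :=
  ∑' p : ℕ × ℕ, ENNReal.ofReal (‖f p.1 p.2‖ * ρ ^ (p.1 + p.2))

/-- `D(f) = Σ_{n≥1} n f_n (z z̄)^n` for a series in `z z̄`. -/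
def Dop (f : FPS) : FPS := fun j k => if j = k then (j : ℂ) * f j k else 0

/-- `D̄(f − f₀) = Σ_{n≥1} (f_n/n) (z z̄)^n` for a series in `z z̄`. -/
def Dbar (f : FPS) : FPS := fun j k => if j = k ∧ j ≠ 0 then f j k / (j : ℂ) else 0

/-- The constant part `f₀` of a series. -/
def constPart (f : FPS) : FPS := fun j k => if j = 0 ∧ k = 0 then f 0 0 else 0

/-- `ξ₀ = ((λ⁻¹+1)z + (λ+1)z̄)/2`. -/
def xi0 (l : ℂ) : FPS := fun a b =>
  if a = 1 ∧ b = 0 then (l⁻¹ + 1) / 2 else if a = 0 ∧ b = 1 then (l + 1) / 2 else 0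

/-! Write `G = S_q(φ⁻,φ)`. By the chain rule, `ℰ(q,φ)·φ_z = ∂_z G − λ⁻¹A + A⁺` with
`A = ∂₁S_q(φ⁻,φ)·(φ_z)⁻`, and on the coefficient of `zⁿz̄ⁿ⁺¹` the last two terms cancel, so
`Π₊(ℰ·φ_z) = 0` says exactly that the diagonal coefficients `G_{n,n}`, `n ≥ 1`, vanish; the same
holds for `Π(ℰ·φ_z̄)`, and `[G] = 1` adds only `G_{0,0} = q₀ = 1`.

Since `φ = z + z̄ + O₃`, the coefficient `G_{n,n}` depends on `q` only through `q₀, …, q_{2n}`,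
and affinely on `q_{2n}` with slope `C(2n,n)((λ⁻¹+1)/2)ⁿ((λ+1)/2)ⁿ ≠ 0` (as `λ ≠ −1`).
The condition on `q₂` is exactly `G_{1,1} = 0`, and the equations `G_{n,n} = 0`, `n ≥ 2`, form a
triangular system for `η_{2n}` with nonzero pivots. -/

section Transport

open PowerSeries

/-- Coefficientwise, `FPS` is `ℂ⟦z⟧⟦z̄⟧`, with `z` the outer variable. -/
def toPowerSeries (f : FPS) : ℂ⟦X⟧⟦X⟧ := mk fun j => mk fun k => f j k

@[simp]
lemma coeff_coeff_toPowerSeries (f : FPS) (j k : ℕ) :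
    coeff k (coeff j (toPowerSeries f)) = f j k := by
  simp [toPowerSeries]

@[simp]
lemma coeff_constantCoeff_toPowerSeries (f : FPS) (k : ℕ) :
    coeff k (constantCoeff (toPowerSeries f)) = f 0 k := by
  rw [← coeff_zero_eq_constantCoeff_apply, coeff_coeff_toPowerSeries]

lemma toPowerSeries_injective : Function.Injective toPowerSeries := fun f g h => by
  funext j k
  rw [← coeff_coeff_toPowerSeries f, ← coeff_coeff_toPowerSeries g, h]

lemma toPowerSeries_add (f g : FPS) :
    toPowerSeries (f + g) = toPowerSeries f + toPowerSeries g := by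
  ext j k
  simp

lemma toPowerSeries_sum {ι : Type*} (s : Finset ι) (f : ι → FPS) :
    toPowerSeries (∑ i ∈ s, f i) = ∑ i ∈ s, toPowerSeries (f i) :=
  map_sum (AddMonoidHom.mk' _ toPowerSeries_add) f s

lemma toPowerSeries_smul (c : ℂ) (f : FPS) :
    toPowerSeries (c • f) = C (C c) * toPowerSeries f := by
  ext j k
  simp

lemma toPowerSeries_oneF : toPowerSeries oneF = 1 := by
  ext j k
  rw [coeff_coeff_toPowerSeries, coeff_one]
  split_ifs with hj <;> simp [oneF, coeff_one, hj]

lemma toPowerSeries_fmul (f g : FPS) :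
    toPowerSeries (fmul f g) = toPowerSeries f * toPowerSeries g := by
  ext j k
  simp only [coeff_coeff_toPowerSeries, fmul, coeff_mul,
    Finset.Nat.sum_antidiagonal_eq_sum_range_succ_mk, map_sum]

lemma toPowerSeries_fpow (f : FPS) (n : ℕ) : toPowerSeries (fpow f n) = toPowerSeries f ^ n := by
  induction n with
  | zero => exact toPowerSeries_oneF
  | succ n ih => rw [fpow, toPowerSeries_fmul, ih, pow_succ', mul_comm]

lemma toPowerSeries_d1 (f : FPS) : toPowerSeries (d1 f) = derivative _ (toPowerSeries f) := by
  ext j k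
  rw [coeff_derivative, mul_comm, show ((j : ℂ⟦X⟧) + 1) = C ((j : ℂ) + 1) by simp, coeff_C_mul]
  simp [d1]

end Transport

section Algebra

lemma fmul_apply (f g : FPS) (j k : ℕ) :
    fmul f g j k = ∑ a ∈ Finset.range (j + 1), ∑ b ∈ Finset.range (k + 1),
      f a b * g (j - a) (k - b) := rfl

lemma fmul_comm (f g : FPS) : fmul f g = fmul g f :=
  toPowerSeries_injective <| by rw [toPowerSeries_fmul, toPowerSeries_fmul, mul_comm]

lemma fmul_assoc (f g h : FPS) : fmul (fmul f g) h = fmul f (fmul g h) :=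
  toPowerSeries_injective <| by simp only [toPowerSeries_fmul, mul_assoc]

lemma add_fmul (f g h : FPS) : fmul (f + g) h = fmul f h + fmul g h :=
  toPowerSeries_injective <| by simp only [toPowerSeries_fmul, toPowerSeries_add, add_mul]

lemma fmul_smul (c : ℂ) (f g : FPS) : fmul f (c • g) = c • fmul f g :=
  toPowerSeries_injective <| by simp only [toPowerSeries_fmul, toPowerSeries_smul]; ring

lemma smul_fmul (c : ℂ) (f g : FPS) : fmul (c • f) g = c • fmul f g :=
  toPowerSeries_injective <| by simp only [toPowerSeries_fmul, toPowerSeries_smul]; ring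

lemma fmul_oneF (f : FPS) : fmul f oneF = f :=
  toPowerSeries_injective <| by rw [toPowerSeries_fmul, toPowerSeries_oneF, mul_one]

lemma oneF_fmul (f : FPS) : fmul oneF f = f := by
  rw [fmul_comm, fmul_oneF]

lemma fmul_zero (f : FPS) : fmul f 0 = 0 := by
  funext j k
  simp [fmul]

lemma zero_fmul (f : FPS) : fmul 0 f = 0 := by
  rw [fmul_comm, fmul_zero]

lemma fpow_zero (f : FPS) : fpow f 0 = oneF := rfl

lemma fpow_succ (f : FPS) (n : ℕ) : fpow f (n + 1) = fmul f (fpow f n) := rfl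

lemma fpow_one (f : FPS) : fpow f 1 = f := fmul_oneF f

lemma fpow_add_eq_sum (f g : FPS) (M : ℕ) :
    fpow (f + g) M
      = ∑ m ∈ Finset.range (M + 1), (M.choose m : ℂ) • fmul (fpow f m) (fpow g (M - m)) := by
  apply toPowerSeries_injective
  rw [toPowerSeries_fpow, toPowerSeries_add, add_pow, toPowerSeries_sum]
  refine Finset.sum_congr rfl fun m _ => ?_
  simp only [toPowerSeries_smul, toPowerSeries_fmul, toPowerSeries_fpow,
    map_natCast]
  ring

lemma fpow_smul (c : ℂ) (f : FPS) (M : ℕ) : fpow (c • f) M = c ^ M • fpow f M := by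
  induction M with
  | zero => simp [fpow]
  | succ M ih => rw [fpow_succ, fpow_succ, ih, fmul_smul, smul_fmul, smul_smul, pow_succ]

lemma d1_oneF : d1 oneF = 0 := by
  funext j k
  simp [d1, oneF]

lemma d1_fmul (f g : FPS) : d1 (fmul f g) = fmul (d1 f) g + fmul f (d1 g) :=
  toPowerSeries_injective <| by
    simp only [toPowerSeries_add, toPowerSeries_d1, toPowerSeries_fmul, Derivation.leibniz,
      smul_eq_mul]
    ring

lemma d1_fpow_succ (u : FPS) (m : ℕ) :
    d1 (fpow u (m + 1)) = ((m + 1 : ℕ) : ℂ) • fmul (fpow u m) (d1 u) :=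
  toPowerSeries_injective <| by
    simp only [toPowerSeries_d1, toPowerSeries_fpow, toPowerSeries_smul, toPowerSeries_fmul,
      Derivation.leibniz_pow, add_tsub_cancel_right, map_natCast, nsmul_eq_mul, smul_eq_mul]

end Algebra

section Swap

lemma swapI_swapI (f : FPS) : swapI (swapI f) = f := rfl

lemma swapI_add (f g : FPS) : swapI (f + g) = swapI f + swapI g := rfl

lemma swapI_d1 (f : FPS) : swapI (d1 f) = d2 (swapI f) := rfl

lemma swapI_fmul (f g : FPS) : swapI (fmul f g) = fmul (swapI f) (swapI g) := by
  funext j k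
  simp only [swapI, fmul]
  rw [Finset.sum_comm]

lemma swapI_fpow (f : FPS) (n : ℕ) : swapI (fpow f n) = fpow (swapI f) n := by
  induction n with
  | zero => funext j k; simp [fpow, swapI, oneF, and_comm]
  | succ n ih => rw [fpow_succ, fpow_succ, swapI_fmul, ih]

end Swap

section Order

variable {u v : FPS}

lemma fpow_apply_eq_zero_of_lt (hu : u 0 0 = 0) {m j k : ℕ} (h : j + k < m) :
    fpow u m j k = 0 := by
  induction m generalizing j k with
  | zero => omega
  | succ m ih =>
    rw [fpow_succ, fmul_apply]
    refine Finset.sum_eq_zero fun a ha => Finset.sum_eq_zero fun b hb => ?_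
    simp only [Finset.mem_range] at ha hb
    by_cases h0 : a = 0 ∧ b = 0
    · rw [h0.1, h0.2, hu, zero_mul]
    · rw [ih (by omega), mul_zero]

lemma fmul_apply_eq_zero_of_left {f g : FPS} {j k : ℕ}
    (h : ∀ a b, a ≤ j → b ≤ k → f a b = 0) : fmul f g j k = 0 :=
  Finset.sum_eq_zero fun a ha => Finset.sum_eq_zero fun b hb => by
    rw [h a b (Nat.lt_succ_iff.mp (Finset.mem_range.mp ha))
      (Nat.lt_succ_iff.mp (Finset.mem_range.mp hb)), zero_mul]

lemma fmul_fpow_fpow_apply_eq_zero_of_lt (hu : u 0 0 = 0) (hv : v 0 0 = 0)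
    {m n j k : ℕ} (h : j + k < m + n) : fmul (fpow u m) (fpow v n) j k = 0 := by
  refine Finset.sum_eq_zero fun a ha => Finset.sum_eq_zero fun b hb => ?_
  simp only [Finset.mem_range] at ha hb
  by_cases hab : a + b < m
  · rw [fpow_apply_eq_zero_of_lt hu hab, zero_mul]
  · rw [fpow_apply_eq_zero_of_lt hv (by omega), mul_zero]

end Order

section Linear

open PowerSeries

def lin (x y : ℂ) : FPS := fun a b =>
  if a = 1 ∧ b = 0 then x else if a = 0 ∧ b = 1 then y else 0

lemma toPowerSeries_lin (x y : ℂ) : toPowerSeries (lin x y) = C (C x) * X + C (C y * X) := by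
  ext j k
  rcases j with _ | _ | j <;> rcases k with _ | _ | k <;> simp [lin, coeff_X]

lemma toPowerSeries_mulz (f : FPS) : toPowerSeries (mulz f) = X * toPowerSeries f := by
  ext j k
  rcases j with _ | j <;> simp [mulz]

lemma toPowerSeries_mulzbar (f : FPS) : toPowerSeries (mulzbar f) = C X * toPowerSeries f := by
  ext j k
  rcases k with _ | k <;> simp [mulzbar]

lemma fmul_lin (x y : ℂ) (f : FPS) : fmul (lin x y) f = x • mulz f + y • mulzbar f :=
  toPowerSeries_injective <| by
    simp only [toPowerSeries_fmul, toPowerSeries_lin, toPowerSeries_add, toPowerSeries_smul,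
      toPowerSeries_mulz, toPowerSeries_mulzbar, map_mul]
    ring

lemma fpow_lin_apply (x y : ℂ) (m j k : ℕ) :
    fpow (lin x y) m j k = if j + k = m then (m.choose j : ℂ) * x ^ j * y ^ k else 0 := by
  induction m generalizing j k with
  | zero =>
    simp only [fpow_zero, oneF, Nat.add_eq_zero_iff]
    split_ifs with h <;> simp [h]
  | succ m ih =>
    rw [fpow_succ, fmul_lin]
    simp only [Pi.add_apply, Pi.smul_apply, smul_eq_mul, mulz, mulzbar]
    rcases j with _ | j <;> rcases k with _ | k <;>
      simp only [ih, Nat.add_sub_cancel, if_true, if_false, Nat.succ_ne_zero] <;>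
      split_ifs <;> first | omega | simp_all [Nat.choose_succ_succ, pow_succ] <;> ring

lemma fpow_apply_eq_fpow_lin {w : FPS} (hw : w 0 0 = 0) {m j k : ℕ} (h : j + k = m) :
    fpow w m j k = fpow (lin (w 1 0) (w 0 1)) m j k := by
  induction m generalizing j k with
  | zero => rfl
  | succ m ih =>
    have hlin : lin (w 1 0) (w 0 1) 0 0 = 0 := by simp [lin]
    rw [fpow_succ, fpow_succ, fmul_apply, fmul_apply]
    refine Finset.sum_congr rfl fun a ha => Finset.sum_congr rfl fun b hb => ?_
    simp only [Finset.mem_range] at ha hb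
    obtain hab | hab | hab : a + b = 0 ∨ a + b = 1 ∨ 2 ≤ a + b := by omega
    · obtain ⟨rfl, rfl⟩ : a = 0 ∧ b = 0 := by omega
      rw [hw, hlin, zero_mul, zero_mul]
    · rw [ih (by omega)]
      obtain ⟨rfl, rfl⟩ | ⟨rfl, rfl⟩ : (a = 1 ∧ b = 0) ∨ (a = 0 ∧ b = 1) := by omega
      all_goals simp [lin]
    · rw [fpow_apply_eq_zero_of_lt hw (by omega), fpow_apply_eq_zero_of_lt hlin (by omega),
        mul_zero, mul_zero]

lemma fpow_apply_of_add_eq {w : FPS} (hw : w 0 0 = 0) {m j k : ℕ} (h : j + k = m) :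
    fpow w m j k = (m.choose j : ℂ) * w 1 0 ^ j * w 0 1 ^ k := by
  rw [fpow_apply_eq_fpow_lin hw h, fpow_lin_apply, if_pos h]

lemma halfSum_eq_lin : halfSum = lin (1 / 2) (1 / 2) := rfl

lemma halfDiff_eq_lin : halfDiff = lin (1 / 2) (-(1 / 2)) := rfl

end Linear

section Twist

variable {l : ℂ}

lemma minus_apply_zero_zero (l : ℂ) {f : FPS} (hf : f 0 0 = 0) : minus l f 0 0 = 0 := by
  simp [minus, hf]

lemma plus_fmul (hl : l ≠ 0) (f g : FPS) : plus l (fmul f g) = fmul (plus l f) (plus l g) := by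
  funext j k
  simp only [plus, fmul, Finset.mul_sum]
  refine Finset.sum_congr rfl fun a ha => Finset.sum_congr rfl fun b hb => ?_
  simp only [Finset.mem_range] at ha hb
  rw [Nat.cast_sub (by omega), Nat.cast_sub (by omega),
    show (j : ℤ) - k = (a - b) + ((j - a) - (k - b)) by ring, zpow_add₀ hl]
  ring

lemma plus_fpow (hl : l ≠ 0) (f : FPS) (m : ℕ) : plus l (fpow f m) = fpow (plus l f) m := by
  induction m with
  | zero =>
    funext j k
    by_cases h : j = 0 ∧ k = 0 <;> simp [fpow_zero, plus, oneF, h]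
  | succ m ih => rw [fpow_succ, fpow_succ, plus_fmul hl, ih]

lemma plus_minus (hl : l ≠ 0) (f : FPS) : plus l (minus l f) = f := by
  funext j k
  rw [plus, minus, ← mul_assoc, ← zpow_add₀ hl, sub_add_sub_cancel, sub_self, zpow_zero,
    one_mul]

lemma d1_minus (hl : l ≠ 0) (f : FPS) : d1 (minus l f) = l⁻¹ • minus l (d1 f) := by
  funext j k
  simp only [d1, minus, Pi.smul_apply, smul_eq_mul]
  rw [show (k : ℤ) - ((j + 1 : ℕ) : ℤ) = -1 + (k - j) by push_cast; ring, zpow_add₀ hl,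
    zpow_neg_one]
  ring

lemma d2_minus (hl : l ≠ 0) (f : FPS) : d2 (minus l f) = l • minus l (d2 f) := by
  funext j k
  simp only [d2, minus, Pi.smul_apply, smul_eq_mul]
  rw [show ((k + 1 : ℕ) : ℤ) - j = 1 + (k - j) by push_cast; ring, zpow_add₀ hl, zpow_one]
  ring

end Twist

section Subst

variable {u v : FPS}

lemma subst2_apply (F u v : FPS) (j k : ℕ) :
    subst2 F u v j k = ∑ m ∈ Finset.range (j + k + 1), ∑ n ∈ Finset.range (j + k + 1),
      F m n * fmul (fpow u m) (fpow v n) j k := rfl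

lemma subst2_apply_eq_sum_range (hu : u 0 0 = 0) (hv : v 0 0 = 0) (F : FPS) {j k N : ℕ}
    (h : j + k ≤ N) :
    subst2 F u v j k = ∑ m ∈ Finset.range (N + 1), ∑ n ∈ Finset.range (N + 1),
      F m n * fmul (fpow u m) (fpow v n) j k := by
  have hzero : ∀ m n, j + k < m + n → F m n * fmul (fpow u m) (fpow v n) j k = 0 :=
    fun m n hmn => by rw [fmul_fpow_fpow_apply_eq_zero_of_lt hu hv hmn, mul_zero]
  have hsub : Finset.range (j + k + 1) ⊆ Finset.range (N + 1) :=
    Finset.range_subset_range.mpr (by omega)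
  rw [subst2_apply, ← Finset.sum_subset hsub fun m _ hm => Finset.sum_eq_zero fun n _ =>
    hzero m n (by simp at hm; omega)]
  exact Finset.sum_congr rfl fun m _ => Finset.sum_subset hsub fun n _ hn =>
    hzero m n (by simp at hn; omega)

lemma subst2_apply_zero_zero (F u v : FPS) : subst2 F u v 0 0 = F 0 0 := by
  simp [subst2, fmul, fpow, oneF]

lemma subst2_add (F G u v : FPS) : subst2 (F + G) u v = subst2 F u v + subst2 G u v := by
  funext j k
  simp [subst2, add_mul, Finset.sum_add_distrib]

lemma subst2_smul (c : ℂ) (F u v : FPS) : subst2 (c • F) u v = c • subst2 F u v := by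
  funext j k
  simp [subst2, Finset.mul_sum, mul_assoc]

lemma swapI_subst2 (F u v : FPS) : swapI (subst2 F u v) = subst2 F (swapI u) (swapI v) := by
  funext j k
  simp only [swapI, subst2, Nat.add_comm k j]
  refine Finset.sum_congr rfl fun m _ => Finset.sum_congr rfl fun n _ => ?_
  rw [← swapI_fpow, ← swapI_fpow, ← swapI_fmul]
  rfl

lemma plus_subst2 {l : ℂ} (hl : l ≠ 0) (F u v : FPS) :
    plus l (subst2 F u v) = subst2 F (plus l u) (plus l v) := by
  funext j k
  simp only [plus, subst2, Finset.mul_sum]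
  refine Finset.sum_congr rfl fun m _ => Finset.sum_congr rfl fun n _ => ?_
  rw [← plus_fpow hl, ← plus_fpow hl, ← plus_fmul hl, plus, mul_left_comm]

lemma fmul_subst2_apply (hu : u 0 0 = 0) (hv : v 0 0 = 0) (F w : FPS) (j k : ℕ) :
    fmul (subst2 F u v) w j k = ∑ m ∈ Finset.range (j + k + 2), ∑ n ∈ Finset.range (j + k + 2),
      F m n * fmul (fmul (fpow u m) (fpow v n)) w j k := by
  have hexp : ∀ a ∈ Finset.range (j + 1), ∀ b ∈ Finset.range (k + 1),
      subst2 F u v a b * w (j - a) (k - b) = ∑ m ∈ Finset.range (j + k + 2),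
        ∑ n ∈ Finset.range (j + k + 2),
          F m n * (fmul (fpow u m) (fpow v n) a b * w (j - a) (k - b)) := by
    intro a ha b hb
    simp only [Finset.mem_range] at ha hb
    rw [subst2_apply_eq_sum_range hu hv F (N := j + k + 1) (by omega)]
    simp only [Finset.sum_mul, mul_assoc]
  rw [fmul_apply, Finset.sum_congr rfl fun a ha => Finset.sum_congr rfl (hexp a ha)]
  simp only [fmul_apply (fmul _ _), Finset.mul_sum]
  simp_rw [← Finset.sum_product']
  exact Finset.sum_nbij' (fun x => (x.2.2.1, x.2.2.2, x.1, x.2.1))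
    (fun x => (x.2.2.1, x.2.2.2, x.1, x.2.1)) (by simp +contextual) (by simp +contextual)
    (by simp) (by simp) (by simp)

lemma fmul_fpow_fpow_fmul_apply_eq_zero_of_lt (hu : u 0 0 = 0) (hv : v 0 0 = 0) (w : FPS)
    {m n j k : ℕ} (h : j + k < m + n) : fmul (fmul (fpow u m) (fpow v n)) w j k = 0 :=
  fmul_apply_eq_zero_of_left fun _ _ ha hb =>
    fmul_fpow_fpow_apply_eq_zero_of_lt hu hv (by omega)

lemma sum_mul_fmul_d1_fpow_fpow_apply (hu : u 0 0 = 0) (hv : v 0 0 = 0) (F : FPS) (j k : ℕ) :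
    ∑ m ∈ Finset.range (j + k + 2), ∑ n ∈ Finset.range (j + k + 2),
      F m n * fmul (d1 (fpow u m)) (fpow v n) j k = fmul (subst2 (d1 F) u v) (d1 u) j k := by
  have hbot : ∑ n ∈ Finset.range (j + k + 2), F 0 n * fmul (d1 (fpow u 0)) (fpow v n) j k = 0 := by
    simp [fpow_zero, d1_oneF, zero_fmul]
  have htop : ∑ n ∈ Finset.range (j + k + 2),
      d1 F (j + k + 1) n * fmul (fmul (fpow u (j + k + 1)) (fpow v n)) (d1 u) j k = 0 :=
    Finset.sum_eq_zero fun n _ => by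
      rw [fmul_fpow_fpow_fmul_apply_eq_zero_of_lt hu hv _ (by omega), mul_zero]
  rw [fmul_subst2_apply hu hv, Finset.sum_range_succ', hbot, add_zero]
  conv_rhs => rw [Finset.sum_range_succ, htop, add_zero]
  refine Finset.sum_congr rfl fun m _ => Finset.sum_congr rfl fun n _ => ?_
  rw [d1_fpow_succ, smul_fmul, fmul_assoc, fmul_comm (d1 u), ← fmul_assoc]
  simp only [d1, Pi.smul_apply, smul_eq_mul]
  ring

lemma sum_mul_fmul_fpow_d1_fpow_apply (hu : u 0 0 = 0) (hv : v 0 0 = 0) (F : FPS) (j k : ℕ) :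
    ∑ m ∈ Finset.range (j + k + 2), ∑ n ∈ Finset.range (j + k + 2),
      F m n * fmul (fpow u m) (d1 (fpow v n)) j k = fmul (subst2 (d2 F) u v) (d1 v) j k := by
  rw [fmul_subst2_apply hu hv]
  refine Finset.sum_congr rfl fun m _ => ?_
  have hbot : F m 0 * fmul (fpow u m) (d1 (fpow v 0)) j k = 0 := by
    simp [fpow_zero, d1_oneF, fmul_zero]
  have htop : d2 F m (j + k + 1) * fmul (fmul (fpow u m) (fpow v (j + k + 1))) (d1 v) j k = 0 := by
    rw [fmul_fpow_fpow_fmul_apply_eq_zero_of_lt hu hv _ (by omega), mul_zero]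
  rw [Finset.sum_range_succ', hbot, add_zero]
  conv_rhs => rw [Finset.sum_range_succ, htop, add_zero]
  refine Finset.sum_congr rfl fun n _ => ?_
  rw [d1_fpow_succ, fmul_smul, ← fmul_assoc]
  simp only [d2, Pi.smul_apply, smul_eq_mul]
  ring

lemma d1_subst2 (hu : u 0 0 = 0) (hv : v 0 0 = 0) (F : FPS) :
    d1 (subst2 F u v) = fmul (subst2 (d1 F) u v) (d1 u) + fmul (subst2 (d2 F) u v) (d1 v) := by
  funext j k
  rw [Pi.add_apply, Pi.add_apply, ← sum_mul_fmul_d1_fpow_fpow_apply hu hv,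
    ← sum_mul_fmul_fpow_d1_fpow_apply hu hv, ← Finset.sum_add_distrib]
  simp only [d1, subst2_apply, Finset.mul_sum, ← Finset.sum_add_distrib, ← mul_add,
    show j + 1 + k + 1 = j + k + 2 by ring]
  refine Finset.sum_congr rfl fun m _ => Finset.sum_congr rfl fun n _ => ?_
  rw [← Pi.add_apply, ← Pi.add_apply, ← d1_fmul, d1, mul_left_comm]

lemma d2_subst2 (hu : u 0 0 = 0) (hv : v 0 0 = 0) (F : FPS) :
    d2 (subst2 F u v) = fmul (subst2 (d1 F) u v) (d2 u) + fmul (subst2 (d2 F) u v) (d2 v) := by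
  have h := congrArg swapI (d1_subst2 (u := swapI u) (v := swapI v) hu hv F)
  simpa only [swapI_d1, swapI_subst2, swapI_add, swapI_fmul, swapI_swapI] using h

end Subst

section Projections

variable {l : ℂ} {φ : FPS}

lemma fmul_Err_d1 (hl : l ≠ 0) (hφ : φ 0 0 = 0) (q : OPS) :
    fmul (Err l q φ) (d1 φ) = d1 (subst2 (Sq q) (minus l φ) φ)
      - l⁻¹ • fmul (subst2 (d1 (Sq q)) (minus l φ) φ) (minus l (d1 φ))
      + plus l (fmul (subst2 (d1 (Sq q)) (minus l φ) φ) (minus l (d1 φ))) := by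
  rw [Err, add_fmul, d1_subst2 (minus_apply_zero_zero l hφ) hφ, d1_minus hl, fmul_smul,
    plus_fmul hl, plus_minus hl, plus_subst2 hl, plus_minus hl]
  abel

lemma fmul_Err_d2 (hl : l ≠ 0) (hφ : φ 0 0 = 0) (q : OPS) :
    fmul (Err l q φ) (d2 φ) = d2 (subst2 (Sq q) (minus l φ) φ)
      - l • fmul (subst2 (d1 (Sq q)) (minus l φ) φ) (minus l (d2 φ))
      + plus l (fmul (subst2 (d1 (Sq q)) (minus l φ) φ) (minus l (d2 φ))) := by
  rw [Err, add_fmul, d2_subst2 (minus_apply_zero_zero l hφ) hφ, d2_minus hl, fmul_smul,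
    plus_fmul hl, plus_minus hl, plus_subst2 hl, plus_minus hl]
  abel

lemma fmul_Err_d1_apply_self_succ (hl : l ≠ 0) (hφ : φ 0 0 = 0) (q : OPS) (n : ℕ) :
    fmul (Err l q φ) (d1 φ) n (n + 1)
      = ((n + 1 : ℕ) : ℂ) * subst2 (Sq q) (minus l φ) φ (n + 1) (n + 1) := by
  rw [fmul_Err_d1 hl hφ]
  simp only [Pi.add_apply, Pi.sub_apply, Pi.smul_apply, smul_eq_mul, plus, d1]
  rw [show (n : ℤ) - ((n + 1 : ℕ) : ℤ) = -1 by push_cast; ring, zpow_neg_one]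
  ring

lemma fmul_Err_d2_apply_succ_self (hl : l ≠ 0) (hφ : φ 0 0 = 0) (q : OPS) (n : ℕ) :
    fmul (Err l q φ) (d2 φ) (n + 1) n
      = ((n + 1 : ℕ) : ℂ) * subst2 (Sq q) (minus l φ) φ (n + 1) (n + 1) := by
  rw [fmul_Err_d2 hl hφ]
  simp only [Pi.add_apply, Pi.sub_apply, Pi.smul_apply, smul_eq_mul, plus, d2]
  rw [show ((n + 1 : ℕ) : ℤ) - (n : ℤ) = 1 by push_cast; ring, zpow_one]
  ring

lemma Pip_fmul_Err_d1_eq_zero_iff (hl : l ≠ 0) (hφ : φ 0 0 = 0) (q : OPS) :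
    Pip (fmul (Err l q φ) (d1 φ)) = 0
      ↔ ∀ n : ℕ, subst2 (Sq q) (minus l φ) φ (n + 1) (n + 1) = 0 := by
  simp only [funext_iff, Pip, Pi.zero_apply, ite_eq_right_iff, forall_eq,
    fmul_Err_d1_apply_self_succ hl hφ, mul_eq_zero, Nat.cast_eq_zero, Nat.succ_ne_zero,
    false_or]

lemma Pim_fmul_Err_d2_eq_zero_iff (hl : l ≠ 0) (hφ : φ 0 0 = 0) (q : OPS) :
    Pim (fmul (Err l q φ) (d2 φ)) = 0
      ↔ ∀ n : ℕ, subst2 (Sq q) (minus l φ) φ (n + 1) (n + 1) = 0 := by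
  simp only [funext_iff, Pim, Pi.zero_apply, ite_eq_right_iff]
  rw [forall_comm]
  simp only [forall_eq, fmul_Err_d2_apply_succ_self hl hφ, mul_eq_zero, Nat.cast_eq_zero,
    Nat.succ_ne_zero, false_or]

end Projections

lemma avg_eq_oneF_iff (G : FPS) :
    avg G = oneF ↔ G 0 0 = 1 ∧ ∀ n : ℕ, G (n + 1) (n + 1) = 0 := by
  simp only [funext_iff, avg, oneF]
  refine ⟨fun h => ⟨by simpa using h 0 0, fun n => by simpa using h (n + 1) (n + 1)⟩, ?_⟩
  rintro ⟨h0, h⟩ j k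
  by_cases hjk : j = k
  · subst hjk
    rcases j with _ | n
    · simp [h0]
    · simp [h n]
  · simp [hjk, show ¬(j = 0 ∧ k = 0) by omega]

section Generating

lemma substOne_add (q r : OPS) (u : FPS) : substOne (q + r) u = substOne q u + substOne r u := by
  funext j k
  simp [substOne, add_mul, Finset.sum_add_distrib]

lemma substOne_smul (c : ℂ) (q : OPS) (u : FPS) : substOne (c • q) u = c • substOne q u := by
  funext j k
  simp [substOne, Finset.mul_sum, mul_assoc]

lemma Sq_add (q r : OPS) : Sq (q + r) = Sq q + Sq r := by
  rw [Sq, Sq, Sq, substOne_add, add_fmul]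

lemma Sq_smul (c : ℂ) (q : OPS) : Sq (c • q) = c • Sq q := by
  rw [Sq, Sq, substOne_smul, smul_fmul]

lemma substOne_lin_apply (q : OPS) (x y : ℂ) (a b : ℕ) :
    substOne q (lin x y) a b = q (a + b) * (a + b).choose a * x ^ a * y ^ b := by
  simp only [substOne, fpow_lin_apply, mul_ite, mul_zero]
  rw [Finset.sum_ite_eq (Finset.range (a + b + 1)) (a + b), if_pos (by simp)]
  ring

lemma substOne_apply_zero_zero (q : OPS) (u : FPS) : substOne q u 0 0 = q 0 := by
  simp [substOne, fpow_zero, oneF]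

lemma cosSeries_zero : cosSeries 0 = 1 := by
  simp [cosSeries]

lemma Sq_apply_of_forall_lt (q : OPS) {m₁ m₂ : ℕ} (hq : ∀ i < m₁ + m₂, q i = 0) :
    Sq q m₁ m₂ = q (m₁ + m₂) * (m₁ + m₂).choose m₁ * (1 / 2) ^ (m₁ + m₂) := by
  have hsum : ∀ a b, substOne q halfSum a b = q (a + b) * (a + b).choose a * (1 / 2) ^ (a + b) :=
    fun a b => by rw [halfSum_eq_lin, substOne_lin_apply, pow_add]; ring
  rw [Sq, fmul_apply, Finset.sum_eq_single m₁, Finset.sum_eq_single m₂]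
  · rw [hsum, Nat.sub_self, Nat.sub_self, substOne_apply_zero_zero, cosSeries_zero, mul_one]
  · intro b hb hne
    rw [hsum, hq _ (by simp at hb; omega), zero_mul, zero_mul, zero_mul]
  · simp
  · intro a ha hne
    refine Finset.sum_eq_zero fun b hb => ?_
    rw [hsum, hq _ (by simp at ha hb; omega), zero_mul, zero_mul, zero_mul]
  · simp

lemma substOne_apply_congr {q r : OPS} {j k : ℕ} (h : ∀ i ≤ j + k, q i = r i) (u : FPS) :
    substOne q u j k = substOne r u j k :=
  Finset.sum_congr rfl fun i hi => by rw [h i (Nat.lt_succ_iff.mp (Finset.mem_range.mp hi))]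

lemma Sq_apply_congr {q r : OPS} {m₁ m₂ : ℕ} (h : ∀ i ≤ m₁ + m₂, q i = r i) :
    Sq q m₁ m₂ = Sq r m₁ m₂ := by
  rw [Sq, Sq, fmul_apply, fmul_apply]
  exact Finset.sum_congr rfl fun a ha => Finset.sum_congr rfl fun b hb => by
    rw [substOne_apply_congr fun i hi => h i (by simp at ha hb; omega)]

lemma subst2_Sq_apply_congr {u v : FPS} (hu : u 0 0 = 0) (hv : v 0 0 = 0) {q r : OPS}
    {j k : ℕ} (h : ∀ i ≤ j + k, q i = r i) :
    subst2 (Sq q) u v j k = subst2 (Sq r) u v j k := by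
  refine Finset.sum_congr rfl fun m _ => Finset.sum_congr rfl fun n _ => ?_
  by_cases hmn : m + n ≤ j + k
  · rw [Sq_apply_congr fun i hi => h i (by omega)]
  · rw [fmul_fpow_fpow_apply_eq_zero_of_lt hu hv (by omega), mul_zero, mul_zero]

lemma subst2_Sq_single_apply {u v : FPS} (hu : u 0 0 = 0) (hv : v 0 0 = 0) (j k : ℕ) :
    subst2 (Sq (Pi.single (j + k) 1)) u v j k
      = ((j + k).choose j : ℂ) * ((u 1 0 + v 1 0) / 2) ^ j * ((u 0 1 + v 0 1) / 2) ^ k := by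
  have hξ : ((1 / 2 : ℂ) • (u + v)) 0 0 = 0 := by simp [hu, hv]
  suffices h : subst2 (Sq (Pi.single (j + k) 1)) u v j k
      = fpow ((1 / 2 : ℂ) • (u + v)) (j + k) j k by
    rw [h, fpow_apply_of_add_eq hξ rfl]
    simp only [Pi.smul_apply, Pi.add_apply, smul_eq_mul]
    ring
  simp only [fpow_smul, fpow_add_eq_sum, Pi.smul_apply, Finset.sum_apply, smul_eq_mul,
    Finset.mul_sum]
  refine Finset.sum_congr rfl fun m hm => ?_
  simp only [Finset.mem_range] at hm
  rw [Finset.sum_eq_single (j + k - m)]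
  · rw [Sq_apply_of_forall_lt _ fun i hi => Pi.single_eq_of_ne (by omega) _,
      show m + (j + k - m) = j + k by omega, Pi.single_eq_same]
    ring
  · intro n _ hn
    by_cases hlt : m + n < j + k
    · rw [Sq_apply_of_forall_lt _ fun i hi => Pi.single_eq_of_ne (by omega) _,
        Pi.single_eq_of_ne hlt.ne, zero_mul, zero_mul, zero_mul]
    · rw [fmul_fpow_fpow_apply_eq_zero_of_lt hu hv (by omega), mul_zero]
  · simp

lemma subst2_Sq_add_apply {u v : FPS} (hu : u 0 0 = 0) (hv : v 0 0 = 0) (q r : OPS) (j k : ℕ) :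
    subst2 (Sq (q + r)) u v j k = subst2 (Sq (q + (Set.Iio (j + k)).indicator r)) u v j k
      + r (j + k) * subst2 (Sq (Pi.single (j + k) 1)) u v j k := by
  have hagree : ∀ i ≤ j + k,
      (q + r) i
        = (q + (Set.Iio (j + k)).indicator r + r (j + k) • (Pi.single (j + k) 1 : OPS)) i := by
    intro i hi
    rcases hi.lt_or_eq with hi | rfl
    · simp [Set.indicator_of_mem (Set.mem_Iio.mpr hi), Pi.single_eq_of_ne hi.ne]
    · simp
  rw [subst2_Sq_apply_congr hu hv hagree, Sq_add, subst2_add, Sq_smul, subst2_smul]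
  rfl

end Generating

lemma subst2_apply_one_one {u v : FPS} (hu : u 0 0 = 0) (hv : v 0 0 = 0) (hu₁ : u 1 1 = 0)
    (hv₁ : v 1 1 = 0) (F : FPS) :
    subst2 F u v 1 1 = F 2 0 * (2 * u 1 0 * u 0 1) + F 1 1 * (u 1 0 * v 0 1 + u 0 1 * v 1 0)
      + F 0 2 * (2 * v 1 0 * v 0 1) := by
  have hdeg : ∀ m n, 2 < m + n → fmul (fpow u m) (fpow v n) 1 1 = 0 :=
    fun m n h => fmul_fpow_fpow_apply_eq_zero_of_lt hu hv h
  have h11 : fmul u v 1 1 = u 1 0 * v 0 1 + u 0 1 * v 1 0 := by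
    simp [fmul_apply, Finset.sum_range_succ, hu, hv, hu₁, hv₁]
    ring
  rw [subst2_apply]
  simp only [Finset.sum_range_succ, Finset.sum_range_zero, zero_add]
  rw [hdeg 2 1 (by norm_num), hdeg 1 2 (by norm_num), hdeg 2 2 (by norm_num)]
  simp only [mul_zero, add_zero, fpow_zero, fpow_one, fmul_oneF, oneF_fmul, h11, hu₁, hv₁,
    fpow_apply_of_add_eq hu (show 1 + 1 = 2 from rfl),
    fpow_apply_of_add_eq hv (show 1 + 1 = 2 from rfl)]
  simp [oneF]
  ring

lemma Sq_apply_of_add_eq_two (q : OPS) :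
    Sq q 2 0 = q 2 / 4 - q 0 / 8 ∧ Sq q 1 1 = q 2 / 2 + q 0 / 4 ∧ Sq q 0 2 = q 2 / 4 - q 0 / 8 := by
  have hcos : cosSeries 1 = 0 ∧ cosSeries 2 = -(1 / 2) := by
    norm_num [cosSeries, Nat.factorial]
  simp only [Sq, fmul_apply, Finset.sum_range_succ, Finset.sum_range_zero, zero_add,
    halfSum_eq_lin, halfDiff_eq_lin, substOne_lin_apply, hcos]
  norm_num [cosSeries_zero]
  refine ⟨by ring, by ring, by ring⟩

lemma subst2_Sq_minus_apply_one_one {l : ℂ} (hl : l ≠ 0) {φ : FPS} (hφ : normalized φ) {q : OPS}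
    (hq0 : q 0 = 1) (hq2 : q 2 * (l + 1) ^ 2 = (-(1 / 2) : ℂ) * (l - 1) ^ 2) :
    subst2 (Sq q) (minus l φ) φ 1 1 = 0 := by
  obtain ⟨h00, h10, h01, -, h11, -⟩ := hφ
  obtain ⟨hS20, hS11, hS02⟩ := Sq_apply_of_add_eq_two q
  rw [subst2_apply_one_one (minus_apply_zero_zero l h00) h00 (by simp [minus, h11]) h11]
  simp only [minus, h10, h01, hS20, hS11, hS02, hq0]
  norm_num [zpow_neg_one]
  field_simp
  linear_combination (32 : ℂ) * hq2

section Triangular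

variable {K : Type*} [Field K]

def forwardSubst (S : ℕ → Prop) [DecidablePred S] (Φ : (ℕ → K) → ℕ → K) (c : ℕ → K) (m : ℕ) : K :=
  if S m then -Φ (fun i => if i < m then forwardSubst S Φ c i else 0) m / c m else 0
termination_by m

lemma forwardSubst_eq (S : ℕ → Prop) [DecidablePred S] (Φ : (ℕ → K) → ℕ → K) (c : ℕ → K)
    (m : ℕ) : forwardSubst S Φ c m
      = if S m then -Φ ((Set.Iio m).indicator (forwardSubst S Φ c)) m / c m else 0 := by
  rw [forwardSubst]
  congr
  funext i
  simp [Set.indicator_apply]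

theorem existsUnique_of_triangular (S : ℕ → Prop) (Φ : (ℕ → K) → ℕ → K) (c : ℕ → K)
    (hc : ∀ m, S m → c m ≠ 0)
    (hΦ : ∀ r m, S m → Φ r m = Φ ((Set.Iio m).indicator r) m + r m * c m) :
    ∃! r : ℕ → K, (∀ m, ¬S m → r m = 0) ∧ ∀ m, S m → Φ r m = 0 := by
  classical
  refine ⟨forwardSubst S Φ c, ⟨fun m hm => by rw [forwardSubst_eq, if_neg hm], fun m hm => ?_⟩, ?_⟩
  · rw [hΦ _ m hm, forwardSubst_eq, if_pos hm, div_mul_cancel₀ _ (hc m hm), add_neg_cancel]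
  · rintro r ⟨hsupp, hsol⟩
    funext m
    induction m using Nat.strong_induction_on with
    | _ m ih =>
      by_cases hm : S m
      · have hlow : (Set.Iio m).indicator r = (Set.Iio m).indicator (forwardSubst S Φ c) :=
          Set.indicator_congr fun i hi => ih i hi
        have h := hsol m hm
        rw [hΦ r m hm, hlow] at h
        rw [forwardSubst_eq, if_pos hm, eq_div_iff (hc m hm)]
        linear_combination h
      · rw [hsupp m hm, forwardSubst_eq, if_neg hm]

end Triangular

lemma outer_equations_iff {l : ℂ} (hl : l ≠ 0) {φ : FPS} (hφ : normalized φ) {q : OPS}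
    (hq0 : q 0 = 1) (hq2 : q 2 * (l + 1) ^ 2 = (-(1 / 2) : ℂ) * (l - 1) ^ 2) {Δq : OPS}
    (hΔq : ∀ m : ℕ, (Odd m ∨ m < 4) → Δq m = 0) :
    (Pip (fmul (Err l (q + Δq) φ) (d1 φ)) = 0 ∧ Pim (fmul (Err l (q + Δq) φ) (d2 φ)) = 0 ∧
      avg (subst2 (Sq (q + Δq)) (minus l φ) φ) = oneF)
      ↔ ∀ m : ℕ, ¬(Odd m ∨ m < 4) → subst2 (Sq (q + Δq)) (minus l φ) φ (m / 2) (m / 2) = 0 := by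
  have hu := minus_apply_zero_zero l hφ.1
  rw [Pip_fmul_Err_d1_eq_zero_iff hl hφ.1, Pim_fmul_Err_d2_eq_zero_iff hl hφ.1, avg_eq_oneF_iff,
    subst2_apply_zero_zero, Sq_apply_of_forall_lt _ (by simp), Pi.add_apply, hΔq 0 (by simp), hq0]
  simp only [pow_zero, add_zero, mul_one, Nat.cast_one, Nat.choose_self, true_and, and_self]
  constructor
  · intro h m hm
    obtain ⟨n, rfl⟩ : ∃ n, m = 2 * (n + 1) := ⟨m / 2 - 1, by simp [Nat.odd_iff] at hm; omega⟩
    simpa using h n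
  · intro h n
    rcases n with _ | n
    · rw [subst2_Sq_apply_congr hu hφ.1 (r := q) fun i hi => by simp [hΔq i (by omega)]]
      exact subst2_Sq_minus_apply_one_one hl hφ hq0 hq2
    · simpa using h (2 * (n + 2)) (by simp [Nat.odd_iff]; omega)

lemma subst2_Sq_single_minus_apply_ne_zero {l : ℂ} (hl : l ≠ 0) (hl₁ : l + 1 ≠ 0) {φ : FPS}
    (hφ : normalized φ) {m : ℕ} (hm : Even m) :
    subst2 (Sq (Pi.single m 1)) (minus l φ) φ (m / 2) (m / 2) ≠ 0 := by
  obtain ⟨n, rfl⟩ := hm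
  have h10 : minus l φ 1 0 + φ 1 0 = l⁻¹ * (l + 1) := by
    simp [minus, hφ.2.1, mul_add, inv_mul_cancel₀ hl, add_comm]
  rw [show (n + n) / 2 = n by omega, subst2_Sq_single_apply (minus_apply_zero_zero l hφ.1) hφ.1,
    h10]
  simp [minus, hφ.2.2.1, hl, hl₁, Nat.choose_eq_zero_iff]

theorem outer_equation_solution_general
    (l : ℂ) (hl : ‖l‖ = 1) (hru : ∀ n : ℕ, 0 < n → l ^ n ≠ 1)
    (q : OPS) (hq0 : q 0 = 1)
    (hq2 : q 2 * (l + 1) ^ 2 = (-(1 / 2) : ℂ) * (l - 1) ^ 2)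
    (φ : FPS) (hφ : normalized φ) :
    ∃! Δq : OPS,
      (∀ m : ℕ, (Odd m ∨ m < 4) → Δq m = 0) ∧
      Pip (fmul (Err l (q + Δq) φ) (d1 φ)) = 0 ∧
      Pim (fmul (Err l (q + Δq) φ) (d2 φ)) = 0 ∧
      avg (subst2 (Sq (q + Δq)) (minus l φ) φ) = oneF := by
  have hl₀ : l ≠ 0 := by
    rintro rfl
    simp at hl
  have hl₁ : l + 1 ≠ 0 := fun h => hru 2 two_pos (by rw [eq_neg_of_add_eq_zero_left h]; norm_num)
  have heven : ∀ m : ℕ, ¬(Odd m ∨ m < 4) → Even m := fun m hm =>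
    Nat.not_odd_iff_even.mp (not_or.mp hm).1
  refine (existsUnique_congr fun Δq => and_congr_right fun hΔq =>
    outer_equations_iff hl₀ hφ hq0 hq2 hΔq).mpr ?_
  simpa only [not_not] using existsUnique_of_triangular (fun m => ¬(Odd m ∨ m < 4))
    (fun r m => subst2 (Sq (q + r)) (minus l φ) φ (m / 2) (m / 2))
    (fun m => subst2 (Sq (Pi.single m 1)) (minus l φ) φ (m / 2) (m / 2))
    (fun m hm => subst2_Sq_single_minus_apply_ne_zero hl₀ hl₁ hφ (heven m hm))
    fun r m hm => by
      simpa only [← two_mul, Nat.two_mul_div_two_of_even (heven m hm)] using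
        subst2_Sq_add_apply (minus_apply_zero_zero l hφ.1) hφ.1 q r (m / 2) (m / 2)

/-- There is a unique correction `Δq(t) = Σ_{k≥2} η_{2k} t^{2k}` making
both projections `Π₊(ℰ(q+Δq,φ)·φ_z)` and `Π(ℰ(q+Δq,φ)·φ_z̄)` vanish; equivalently
`[S_{q+Δq}(φ⁻,φ)] = 1`. -/
theorem outer_equation_solution
    (l : ℂ) (hl : ‖l‖ = 1) (hru : ∀ n : ℕ, 0 < n → l ^ n ≠ 1)
    (q : OPS) (hq0 : q 0 = 1) (hqe : ∀ m : ℕ, Odd m → q m = 0)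
    (hq2 : q 2 * (l + 1) ^ 2 = (-(1 / 2) : ℂ) * (l - 1) ^ 2)
    (φ : FPS) (hφ : normalized φ) (hsym : swapI φ = φ) :
    ∃! Δq : OPS,
      (∀ m : ℕ, (Odd m ∨ m < 4) → Δq m = 0) ∧
      Pip (fmul (Err l (q + Δq) φ) (d1 φ)) = 0 ∧
      Pim (fmul (Err l (q + Δq) φ) (d2 φ)) = 0 ∧
      avg (subst2 (Sq (q + Δq)) (minus l φ) φ) = oneF :=
  outer_equation_solution_general l hl hru q hq0 hq2 φ hφ

end Treschev

end
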